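/- Let H be a map on the space of continuous signals u : [0,∞) → ℝⁿ whose outputs are continuous, let M be a real symmetric m×m matrix, let (A, B, C, D) with A ∈ ℝ^{k×k}, B ∈ ℝ^{k×2n}, C ∈ ℝ^{m×k}, D ∈ ℝ^{m×2n} be a state-space realization of the multiplier N, and let Π be a real symmetric 2×2 matrix with entries π₁₁, π₁₂, π₂₂. Suppose that for every pair of inputs u₁, u₂, writing Δv = (Δu, Δy) with Δu = u₁ − u₂ and Δy = Hu₁ − Hu₂, there is a continuously differentiable x : [0,∞) → ℝ^k with x'(t) = A x(t) + B Δv(t), x(0) = 0, and that with g(t) := C x(t) + D Δv(t) the hard IQC holds: ∫₀ᵀ g(t)ᵀ M g(t) dt ≥ 0 for all T > 0. If there exist a real symmetric positive semidefinite k×k matrix P and τ > 0 such that the block matrix [[AᵀP + PA, PB], [BᵀP, −(Π ⊗ Iₙ)]] + τ·[C D]ᵀ M [C D] is negative semidefinite, then for every pair of inputs and every T > 0: π₁₁·∫₀ᵀ |Δu(t)|² dt + 2·π₁₂·∫₀ᵀ Δu(t)ᵀΔy(t) dt + π₂₂·∫₀ᵀ |Δy(t)|² dt ≥ 0; consequently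 SRG_e(H) ⊆ S(Π). -/

import Mathlib

/-! The LMI, tested on the vector `(x, Δv)`, says that the storage function `V(x) = xᵀ P x`
satisfies the pointwise dissipation inequality `V' + τ gᵀ M g ≤ Δvᵀ (Π ⊗ Iₙ) Δv` along the
realization of `N`. Integrating over `[0, T]` with `x(0) = 0`, `V ≥ 0` and the hard IQC
`∫₀ᵀ gᵀ M g ≥ 0` yields `∫₀ᵀ Δvᵀ (Π ⊗ Iₙ) Δv ≥ 0`, the static hard IQC. For the truncations in
`L²`, `‖Δu_T‖² = ∫₀ᵀ |Δu|²` and `⟪Δu_T, Δy_T⟫ = ∫₀ᵀ Δuᵀ Δy`, while an SRG point `z = z_±(u, y)` has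
`Re z = ⟪u, y⟫ / ‖u‖²` and `|z| = ‖y‖ / ‖u‖`; so the static IQC divided by `‖u‖²` is exactly the
inequality defining `S(Π)`. -/

open scoped RealInnerProductSpace Classical
open MeasureTheory Matrix

/-- The measure on `[0,∞)`. -/
noncomputable def posMeasure : Measure ℝ := volume.restrict (Set.Ici (0 : ℝ))

/-- Truncation of a signal: `u_T` equals `u` on `[0,T]` and `0` on `(T,∞)`. -/
noncomputable def trunc {E : Type*} [Zero E] (u : ℝ → E) (T : ℝ) : ℝ → E :=
  fun t => if t ≤ T then u t else 0

/-- The region `S(Π)` in the complex plane associated with a real symmetric 2×2 matrix `Π`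
with entries `π₁₁, π₁₂, π₂₂`:  `S(Π) = {z ∈ ℂ : π₁₁ + 2·π₁₂·Re z + π₂₂·|z|² ≥ 0}`. -/
def SRegion (p11 p12 p22 : ℝ) : Set ℂ :=
  {z : ℂ | 0 ≤ p11 + 2 * p12 * z.re + p22 * ‖z‖ ^ 2}

/-- SRG point `z₊(u, y) = (‖y‖/‖u‖)·exp(+i·arccos(⟪u,y⟫/(‖u‖‖y‖)))` (and `0` for `y = 0`). -/
noncomputable def srgPlus {E : Type*} [NormedAddCommGroup E] [InnerProductSpace ℝ E]
    (u y : E) : ℂ :=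
  if y = 0 then 0 else
    ((‖y‖ / ‖u‖ : ℝ) : ℂ) *
      Complex.exp (Complex.I * (Real.arccos (⟪u, y⟫ / (‖u‖ * ‖y‖)) : ℝ))

/-- SRG point `z₋(u, y) = (‖y‖/‖u‖)·exp(−i·arccos(⟪u,y⟫/(‖u‖‖y‖)))` (and `0` for `y = 0`). -/
noncomputable def srgMinus {E : Type*} [NormedAddCommGroup E] [InnerProductSpace ℝ E]
    (u y : E) : ℂ :=
  if y = 0 then 0 else
    ((‖y‖ / ‖u‖ : ℝ) : ℂ) *
      Complex.exp (-Complex.I * (Real.arccos (⟪u, y⟫ / (‖u‖ * ‖y‖)) : ℝ))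

/-- The stacked signal `Δv = (Δu, Δy) : [0,∞) → ℝ^{2n}`. -/
noncomputable def dvPair {n : ℕ} (du dy : ℝ → EuclideanSpace ℝ (Fin n)) :
    ℝ → (Fin n ⊕ Fin n) → ℝ :=
  fun t => Sum.elim ((WithLp.equiv 2 _) (du t)) ((WithLp.equiv 2 _) (dy t))

/-- `Π ⊗ Iₙ` : the real `2n×2n` block matrix
`[[π₁₁·Iₙ, π₁₂·Iₙ], [π₁₂·Iₙ, π₂₂·Iₙ]]`. -/
def piKronR (n : ℕ) (p11 p12 p22 : ℝ) :
    Matrix (Fin n ⊕ Fin n) (Fin n ⊕ Fin n) ℝ :=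
  Matrix.fromBlocks (p11 • 1) (p12 • 1) (p12 • 1) (p22 • 1)

/-- The hard scaled relative graph of a map `H` on continuous signals:
`SRG_e(H) = ⋃ {z_±((Δu)_T, (Δy)_T)}` over all continuous inputs `u₁, u₂` and all `T > 0`
with `(Δu)_T ≠ 0` (as an element of `L²`). -/
noncomputable def hardSRGc {n : ℕ}
    (H : (ℝ → EuclideanSpace ℝ (Fin n)) → (ℝ → EuclideanSpace ℝ (Fin n))) : Set ℂ :=
  {z : ℂ | ∃ u₁ u₂ : ℝ → EuclideanSpace ℝ (Fin n),
    ContinuousOn u₁ (Set.Ici 0) ∧ ContinuousOn u₂ (Set.Ici 0) ∧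
    ∃ T : ℝ, 0 < T ∧
      ∃ (h₁ : MemLp (trunc (fun t => u₁ t - u₂ t) T) 2 posMeasure)
        (h₂ : MemLp (trunc (fun t => H u₁ t - H u₂ t) T) 2 posMeasure),
        h₁.toLp _ ≠ 0 ∧ (z = srgPlus (h₁.toLp _) (h₂.toLp _) ∨
          z = srgMinus (h₁.toLp _) (h₂.toLp _))}

section Matrix

variable {ι κ μ : Type*} [Fintype ι] [Fintype κ] [Fintype μ]

theorem Matrix.IsSymm.mulVec_dotProduct {P : Matrix ι ι ℝ} (hP : P.IsSymm) (x y : ι → ℝ) :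
    P *ᵥ x ⬝ᵥ y = x ⬝ᵥ P *ᵥ y := by
  rw [dotProduct_comm, ← dotProduct_transpose_mulVec, hP.eq]

theorem dissipation_rate_le_of_lmi {A : Matrix ι ι ℝ} {B : Matrix ι κ ℝ} {C : Matrix μ ι ℝ}
    {D : Matrix μ κ ℝ} {M : Matrix μ μ ℝ} {S : Matrix κ κ ℝ} {P : Matrix ι ι ℝ} {τ : ℝ}
    (hP : P.IsSymm)
    (hLMI : (-(fromBlocks (Aᵀ * P + P * A) (P * B) (Bᵀ * P) (-S) +
        τ • ((fromCols C D)ᵀ * M * fromCols C D))).PosSemidef)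
    (x : ι → ℝ) (w : κ → ℝ) :
    2 * x ⬝ᵥ P *ᵥ (A *ᵥ x + B *ᵥ w) + τ * (C *ᵥ x + D *ᵥ w) ⬝ᵥ M *ᵥ (C *ᵥ x + D *ᵥ w) ≤
      w ⬝ᵥ S *ᵥ w := by
  have h := hLMI.dotProduct_mulVec_nonneg (Sum.elim x w)
  simp only [star_trivial, neg_mulVec, dotProduct_neg, add_mulVec, dotProduct_add, smul_mulVec,
    dotProduct_smul, smul_eq_mul, fromBlocks_mulVec, sumElim_dotProduct_sumElim, Sum.elim_comp_inl,
    Sum.elim_comp_inr, ← mulVec_mulVec, dotProduct_transpose_mulVec, fromCols_mulVec_sumElim] at h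
  rw [hP.mulVec_dotProduct, hP.mulVec_dotProduct, dotProduct_comm (M *ᵥ _) (C *ᵥ x),
    dotProduct_comm (M *ᵥ _) (D *ᵥ w)] at h
  rw [mulVec_add, dotProduct_add, add_dotProduct]
  linarith

end Matrix

section Calculus

variable {ι κ : Type*} [Fintype ι]

theorem ContinuousOn.dotProduct {f g : ℝ → ι → ℝ} {s : Set ℝ} (hf : ContinuousOn f s)
    (hg : ContinuousOn g s) : ContinuousOn (fun t => f t ⬝ᵥ g t) s :=
  (continuous_fst.dotProduct continuous_snd).comp_continuousOn (hf.prodMk hg)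

theorem ContinuousOn.matrix_mulVec (A : Matrix κ ι ℝ) {f : ℝ → ι → ℝ} {s : Set ℝ}
    (hf : ContinuousOn f s) : ContinuousOn (fun t => A *ᵥ f t) s :=
  (continuous_const.matrix_mulVec continuous_id).comp_continuousOn hf

theorem HasDerivAt.dotProduct {f g : ℝ → ι → ℝ} {f' g' : ι → ℝ} {t : ℝ}
    (hf : HasDerivAt f f' t) (hg : HasDerivAt g g' t) :
    HasDerivAt (fun s => f s ⬝ᵥ g s) (f' ⬝ᵥ g t + f t ⬝ᵥ g') t := by
  have h : HasDerivAt (fun s => ∑ i, f s i * g s i) (∑ i, (f' i * g t i + f t i * g' i)) t :=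
    .fun_sum fun i _ => (hasDerivAt_pi.1 hf i).fun_mul (hasDerivAt_pi.1 hg i)
  rwa [Finset.sum_add_distrib] at h

theorem HasDerivAt.matrix_mulVec (A : Matrix κ ι ℝ) {f : ℝ → ι → ℝ} {f' : ι → ℝ} {t : ℝ}
    (hf : HasDerivAt f f' t) : HasDerivAt (fun s => A *ᵥ f s) (A *ᵥ f') t :=
  hasDerivAt_pi.2 fun i =>
    ((hasDerivAt_const t (A i)).dotProduct hf).congr_deriv (by simp [mulVec])

theorem HasDerivAt.dotProduct_mulVec_self {P : Matrix ι ι ℝ} (hP : P.IsSymm) {f : ℝ → ι → ℝ}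
    {f' : ι → ℝ} {t : ℝ} (hf : HasDerivAt f f' t) :
    HasDerivAt (fun s => f s ⬝ᵥ P *ᵥ f s) (2 * f t ⬝ᵥ P *ᵥ f') t :=
  (hf.dotProduct (hf.matrix_mulVec P)).congr_deriv <| by
    rw [dotProduct_comm f', hP.mulVec_dotProduct]
    ring

end Calculus

section Dissipation

variable {ι κ μ : Type*} [Fintype ι] [Fintype κ] [Fintype μ] {A : Matrix ι ι ℝ}
  {B : Matrix ι κ ℝ} {C : Matrix μ ι ℝ} {D : Matrix μ κ ℝ} {M : Matrix μ μ ℝ} {S : Matrix κ κ ℝ}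
  {P : Matrix ι ι ℝ} {τ T : ℝ} {x : ℝ → ι → ℝ} {w : ℝ → κ → ℝ}

theorem dissipation_inequality_of_lmi (hP : P.IsSymm)
    (hLMI : (-(fromBlocks (Aᵀ * P + P * A) (P * B) (Bᵀ * P) (-S) +
        τ • ((fromCols C D)ᵀ * M * fromCols C D))).PosSemidef)
    (hT : 0 ≤ T) (hx : ∀ t ∈ Set.Icc 0 T, HasDerivAt x (A *ᵥ x t + B *ᵥ w t) t)
    (hw : ContinuousOn w (Set.Icc 0 T)) :
    x T ⬝ᵥ P *ᵥ x T - x 0 ⬝ᵥ P *ᵥ x 0 +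
        τ * ∫ t in (0 : ℝ)..T, (C *ᵥ x t + D *ᵥ w t) ⬝ᵥ M *ᵥ (C *ᵥ x t + D *ᵥ w t) ≤
      ∫ t in (0 : ℝ)..T, w t ⬝ᵥ S *ᵥ w t := by
  have hxc : ContinuousOn x (Set.Icc 0 T) := fun t ht =>
    (hx t ht).continuousAt.continuousWithinAt
  have hx' : ContinuousOn (fun t => A *ᵥ x t + B *ᵥ w t) (Set.Icc 0 T) :=
    (hxc.matrix_mulVec A).add (hw.matrix_mulVec B)
  have hg : ContinuousOn (fun t => C *ᵥ x t + D *ᵥ w t) (Set.Icc 0 T) :=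
    (hxc.matrix_mulVec C).add (hw.matrix_mulVec D)
  have hstorage_rate : IntervalIntegrable (fun t => 2 * x t ⬝ᵥ P *ᵥ (A *ᵥ x t + B *ᵥ w t))
      volume 0 T :=
    (continuousOn_const.mul (hxc.dotProduct (hx'.matrix_mulVec P))).intervalIntegrable_of_Icc hT
  have hIQC_rate : IntervalIntegrable (fun t => (C *ᵥ x t + D *ᵥ w t) ⬝ᵥ M *ᵥ
      (C *ᵥ x t + D *ᵥ w t)) volume 0 T :=
    (hg.dotProduct (hg.matrix_mulVec M)).intervalIntegrable_of_Icc hT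
  have hsupply_rate : IntervalIntegrable (fun t => w t ⬝ᵥ S *ᵥ w t) volume 0 T :=
    (hw.dotProduct (hw.matrix_mulVec S)).intervalIntegrable_of_Icc hT
  rw [← intervalIntegral.integral_eq_sub_of_hasDerivAt
      (fun t ht => (hx t (Set.uIcc_of_le hT ▸ ht)).dotProduct_mulVec_self hP) hstorage_rate,
    ← intervalIntegral.integral_const_mul, ← intervalIntegral.integral_add hstorage_rate
      (hIQC_rate.const_mul τ)]
  exact intervalIntegral.integral_mono_on hT (hstorage_rate.add (hIQC_rate.const_mul τ))
    hsupply_rate fun t _ => dissipation_rate_le_of_lmi hP hLMI (x t) (w t)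

theorem integral_supply_nonneg_of_lmi (hP : P.PosSemidef) (hτ : 0 ≤ τ)
    (hLMI : (-(fromBlocks (Aᵀ * P + P * A) (P * B) (Bᵀ * P) (-S) +
        τ • ((fromCols C D)ᵀ * M * fromCols C D))).PosSemidef)
    (hT : 0 ≤ T) (hx0 : x 0 = 0) (hx : ∀ t ∈ Set.Icc 0 T, HasDerivAt x (A *ᵥ x t + B *ᵥ w t) t)
    (hw : ContinuousOn w (Set.Icc 0 T))
    (hIQC : 0 ≤ ∫ t in (0 : ℝ)..T, (C *ᵥ x t + D *ᵥ w t) ⬝ᵥ M *ᵥ (C *ᵥ x t + D *ᵥ w t)) :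
    0 ≤ ∫ t in (0 : ℝ)..T, w t ⬝ᵥ S *ᵥ w t := by
  have hdiss := dissipation_inequality_of_lmi (isHermitian_iff_isSymm.1 hP.isHermitian) hLMI hT
    hx hw
  have hstorage := hP.dotProduct_mulVec_nonneg (x T)
  rw [hx0, zero_dotProduct, sub_zero] at hdiss
  rw [star_trivial] at hstorage
  nlinarith [mul_nonneg hτ hIQC]

end Dissipation

section Signals

variable {n : ℕ} {du dy : ℝ → EuclideanSpace ℝ (Fin n)}

theorem dvPair_dotProduct_piKronR_mulVec (p11 p12 p22 : ℝ) (t : ℝ) :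
    dvPair du dy t ⬝ᵥ piKronR n p11 p12 p22 *ᵥ dvPair du dy t =
      p11 * ‖du t‖ ^ 2 + 2 * p12 * ⟪du t, dy t⟫ + p22 * ‖dy t‖ ^ 2 := by
  simp only [dvPair, piKronR, fromBlocks_mulVec, Sum.elim_comp_inl, Sum.elim_comp_inr,
    smul_mulVec, one_mulVec, sumElim_dotProduct_sumElim, dotProduct_add, dotProduct_smul,
    smul_eq_mul, ← real_inner_self_eq_norm_sq, EuclideanSpace.inner_eq_star_dotProduct,
    star_trivial, WithLp.equiv_apply]
  rw [dotProduct_comm (dy t).ofLp]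
  ring

theorem ContinuousOn.dvPair {s : Set ℝ} (hdu : ContinuousOn du s) (hdy : ContinuousOn dy s) :
    ContinuousOn (dvPair du dy) s :=
  continuousOn_pi.2 fun
    | .inl j => (PiLp.continuous_apply 2 _ j).comp_continuousOn hdu
    | .inr j => (PiLp.continuous_apply 2 _ j).comp_continuousOn hdy

theorem integral_dvPair_dotProduct_piKronR_mulVec (p11 p12 p22 : ℝ) {T : ℝ} (hT : 0 ≤ T)
    (hdu : ContinuousOn du (Set.Icc 0 T)) (hdy : ContinuousOn dy (Set.Icc 0 T)) :
    ∫ t in (0 : ℝ)..T, dvPair du dy t ⬝ᵥ piKronR n p11 p12 p22 *ᵥ dvPair du dy t =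
      p11 * (∫ t in (0 : ℝ)..T, ‖du t‖ ^ 2) + 2 * p12 * (∫ t in (0 : ℝ)..T, ⟪du t, dy t⟫) +
        p22 * (∫ t in (0 : ℝ)..T, ‖dy t‖ ^ 2) := by
  have hu : IntervalIntegrable (fun t => ‖du t‖ ^ 2) volume 0 T :=
    (hdu.norm.pow 2).intervalIntegrable_of_Icc hT
  have huy : IntervalIntegrable (fun t => ⟪du t, dy t⟫) volume 0 T :=
    (hdu.inner hdy).intervalIntegrable_of_Icc hT
  have hy : IntervalIntegrable (fun t => ‖dy t‖ ^ 2) volume 0 T :=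
    (hdy.norm.pow 2).intervalIntegrable_of_Icc hT
  simp only [dvPair_dotProduct_piKronR_mulVec]
  rw [intervalIntegral.integral_add ((hu.const_mul _).add (huy.const_mul _)) (hy.const_mul _),
    intervalIntegral.integral_add (hu.const_mul _) (huy.const_mul _),
    intervalIntegral.integral_const_mul, intervalIntegral.integral_const_mul,
    intervalIntegral.integral_const_mul]

end Signals

section ScaledRelativeGraph

variable {E : Type*} [NormedAddCommGroup E] [InnerProductSpace ℝ E]

theorem inner_toLp_trunc {f g : ℝ → E} {T : ℝ} (hT : 0 ≤ T)
    (hf : MemLp (trunc f T) 2 posMeasure) (hg : MemLp (trunc g T) 2 posMeasure) :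
    ⟪hf.toLp _, hg.toLp _⟫ = ∫ t in (0 : ℝ)..T, ⟪f t, g t⟫ := by
  have htrunc : ∀ t, ⟪trunc f T t, trunc g T t⟫ = (Set.Iic T).indicator (fun t => ⟪f t, g t⟫) t :=
    fun t => by by_cases h : t ≤ T <;> simp [trunc, h]
  have hae : ∫ t, ⟪hf.toLp _ t, hg.toLp _ t⟫ ∂posMeasure =
      ∫ t, ⟪trunc f T t, trunc g T t⟫ ∂posMeasure := by
    refine integral_congr_ae ?_
    filter_upwards [hf.coeFn_toLp, hg.coeFn_toLp] with t hft hgt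
    rw [hft, hgt]
  rw [L2.inner_def, hae, funext htrunc, integral_indicator measurableSet_Iic,
    posMeasure, Measure.restrict_restrict measurableSet_Iic, Set.inter_comm, Set.Ici_inter_Iic,
    integral_Icc_eq_integral_Ioc, intervalIntegral.integral_of_le hT]

theorem norm_toLp_trunc_sq {f : ℝ → E} {T : ℝ} (hT : 0 ≤ T) (hf : MemLp (trunc f T) 2 posMeasure) :
    ‖hf.toLp _‖ ^ 2 = ∫ t in (0 : ℝ)..T, ‖f t‖ ^ 2 := by
  simp only [← real_inner_self_eq_norm_sq, inner_toLp_trunc hT]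

theorem srgMinus_eq_conj (u y : E) : srgMinus u y = starRingEnd ℂ (srgPlus u y) := by
  unfold srgMinus srgPlus
  split_ifs <;> simp [← Complex.exp_conj]

theorem norm_srgPlus (u y : E) : ‖srgPlus u y‖ = ‖y‖ / ‖u‖ := by
  unfold srgPlus
  split_ifs with hy
  · simp [hy]
  · rw [norm_mul, mul_comm Complex.I, Complex.norm_exp_ofReal_mul_I, mul_one, Complex.norm_real,
      Real.norm_of_nonneg (by positivity)]

theorem re_srgPlus (u y : E) : (srgPlus u y).re = ⟪u, y⟫ / ‖u‖ ^ 2 := by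
  unfold srgPlus
  split_ifs with hy
  · simp [hy]
  · have hbound := abs_le.1 (abs_real_inner_div_norm_mul_norm_le_one u y)
    rw [mul_comm Complex.I, Complex.re_ofReal_mul, Complex.exp_ofReal_mul_I_re,
      Real.cos_arccos hbound.1 hbound.2, div_mul_div_comm,
      show ‖u‖ * (‖u‖ * ‖y‖) = ‖u‖ ^ 2 * ‖y‖ by ring, mul_comm ‖y‖ ⟪u, y⟫,
      mul_div_mul_right _ _ (norm_ne_zero_iff.2 hy)]

theorem conj_mem_SRegion_iff {p11 p12 p22 : ℝ} {z : ℂ} :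
    starRingEnd ℂ z ∈ SRegion p11 p12 p22 ↔ z ∈ SRegion p11 p12 p22 := by
  simp [SRegion]

theorem srgPlus_mem_SRegion {p11 p12 p22 : ℝ} {u : E} (y : E) (hu : u ≠ 0)
    (h : 0 ≤ p11 * ‖u‖ ^ 2 + 2 * p12 * ⟪u, y⟫ + p22 * ‖y‖ ^ 2) :
    srgPlus u y ∈ SRegion p11 p12 p22 := by
  rw [SRegion, Set.mem_ofPred_eq, re_srgPlus, norm_srgPlus,
    show p11 + 2 * p12 * (⟪u, y⟫ / ‖u‖ ^ 2) + p22 * (‖y‖ / ‖u‖) ^ 2 =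
      (p11 * ‖u‖ ^ 2 + 2 * p12 * ⟪u, y⟫ + p22 * ‖y‖ ^ 2) / ‖u‖ ^ 2 by field_simp]
  positivity

theorem srgMinus_mem_SRegion {p11 p12 p22 : ℝ} {u : E} (y : E) (hu : u ≠ 0)
    (h : 0 ≤ p11 * ‖u‖ ^ 2 + 2 * p12 * ⟪u, y⟫ + p22 * ‖y‖ ^ 2) :
    srgMinus u y ∈ SRegion p11 p12 p22 := by
  rw [srgMinus_eq_conj, conj_mem_SRegion_iff]
  exact srgPlus_mem_SRegion y hu h

end ScaledRelativeGraph

theorem hard_srg_overbound_via_iqc_general (n m k : ℕ)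
    (H : (ℝ → EuclideanSpace ℝ (Fin n)) → (ℝ → EuclideanSpace ℝ (Fin n)))
    (hH : ∀ u, ContinuousOn u (Set.Ici 0) → ContinuousOn (H u) (Set.Ici 0))
    (A : Matrix (Fin k) (Fin k) ℝ) (B : Matrix (Fin k) (Fin n ⊕ Fin n) ℝ)
    (C : Matrix (Fin m) (Fin k) ℝ) (D : Matrix (Fin m) (Fin n ⊕ Fin n) ℝ)
    (M : Matrix (Fin m) (Fin m) ℝ)
    (p11 p12 p22 : ℝ)
    (hIQC : ∀ u₁ u₂ : ℝ → EuclideanSpace ℝ (Fin n),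
      ContinuousOn u₁ (Set.Ici 0) → ContinuousOn u₂ (Set.Ici 0) →
      ∃ x : ℝ → Fin k → ℝ, x 0 = 0 ∧
        (∀ t : ℝ, 0 ≤ t → HasDerivAt x
          (A *ᵥ x t + B *ᵥ dvPair (fun s => u₁ s - u₂ s) (fun s => H u₁ s - H u₂ s) t) t) ∧
        (∀ T : ℝ, 0 < T →
          0 ≤ ∫ t in (0:ℝ)..T,
            (C *ᵥ x t + D *ᵥ dvPair (fun s => u₁ s - u₂ s) (fun s => H u₁ s - H u₂ s) t) ⬝ᵥ
              (M *ᵥ (C *ᵥ x t +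
                D *ᵥ dvPair (fun s => u₁ s - u₂ s) (fun s => H u₁ s - H u₂ s) t))))
    (P : Matrix (Fin k) (Fin k) ℝ) (hP : P.PosSemidef) (τ : ℝ) (hτ : 0 < τ)
    (hLMI : (-(Matrix.fromBlocks (Aᵀ * P + P * A) (P * B) (Bᵀ * P)
          (-(piKronR n p11 p12 p22)) +
        τ • ((Matrix.fromCols C D)ᵀ * M * Matrix.fromCols C D))).PosSemidef) :
    (∀ u₁ u₂ : ℝ → EuclideanSpace ℝ (Fin n),
      ContinuousOn u₁ (Set.Ici 0) → ContinuousOn u₂ (Set.Ici 0) →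
      ∀ T : ℝ, 0 < T →
        0 ≤ p11 * (∫ t in (0:ℝ)..T, ‖u₁ t - u₂ t‖ ^ 2) +
            2 * p12 * (∫ t in (0:ℝ)..T, ⟪u₁ t - u₂ t, H u₁ t - H u₂ t⟫) +
            p22 * (∫ t in (0:ℝ)..T, ‖H u₁ t - H u₂ t‖ ^ 2)) ∧
      hardSRGc H ⊆ SRegion p11 p12 p22 := by
  refine (and_iff_left_of_imp fun hsupply => ?_).2 fun u₁ u₂ hu₁ hu₂ T hT => ?_
  · rintro z ⟨u₁, u₂, hu₁, hu₂, T, hT, h₁, h₂, hne, hz⟩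
    have h := hsupply u₁ u₂ hu₁ hu₂ T hT
    rw [← norm_toLp_trunc_sq hT.le h₁, ← inner_toLp_trunc hT.le h₁ h₂,
      ← norm_toLp_trunc_sq hT.le h₂] at h
    rcases hz with rfl | rfl
    exacts [srgPlus_mem_SRegion _ hne h, srgMinus_mem_SRegion _ hne h]
  · obtain ⟨x, hx0, hx, hIQC⟩ := hIQC u₁ u₂ hu₁ hu₂
    have hdu : ContinuousOn (fun t => u₁ t - u₂ t) (Set.Icc 0 T) :=
      (hu₁.sub hu₂).mono Set.Icc_subset_Ici_self
    have hdy : ContinuousOn (fun t => H u₁ t - H u₂ t) (Set.Icc 0 T) :=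
      ((hH u₁ hu₁).sub (hH u₂ hu₂)).mono Set.Icc_subset_Ici_self
    rw [← integral_dvPair_dotProduct_piKronR_mulVec p11 p12 p22 hT.le hdu hdy]
    exact integral_supply_nonneg_of_lmi hP hτ.le hLMI hT.le hx0 (fun t ht => hx t ht.1)
      (hdu.dvPair hdy) (hIQC T hT)

/-- Hard SRG overbound via a hard IQC with multipliers `(M, N)`,
`N` realized by `(A, B, C, D)`: if `H` satisfies the hard incremental IQC and the LMI
`[[AᵀP + PA, PB], [BᵀP, −(Π ⊗ Iₙ)]] + τ·[C D]ᵀM[C D] ⪯ 0` is feasible with `P ⪰ 0`,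
`τ > 0`, then the static hard IQC with multiplier `Π ⊗ I` holds on every truncation,
and consequently `SRG_e(H) ⊆ S(Π)`. -/
theorem hard_srg_overbound_via_iqc (n m k : ℕ)
    (H : (ℝ → EuclideanSpace ℝ (Fin n)) → (ℝ → EuclideanSpace ℝ (Fin n)))
    (hH : ∀ u, ContinuousOn u (Set.Ici 0) → ContinuousOn (H u) (Set.Ici 0))
    (A : Matrix (Fin k) (Fin k) ℝ) (B : Matrix (Fin k) (Fin n ⊕ Fin n) ℝ)
    (C : Matrix (Fin m) (Fin k) ℝ) (D : Matrix (Fin m) (Fin n ⊕ Fin n) ℝ)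
    (M : Matrix (Fin m) (Fin m) ℝ) (hM : M.IsSymm)
    (p11 p12 p22 : ℝ)
    (hIQC : ∀ u₁ u₂ : ℝ → EuclideanSpace ℝ (Fin n),
      ContinuousOn u₁ (Set.Ici 0) → ContinuousOn u₂ (Set.Ici 0) →
      ∃ x : ℝ → Fin k → ℝ, x 0 = 0 ∧
        (∀ t : ℝ, 0 ≤ t → HasDerivAt x
          (A *ᵥ x t + B *ᵥ dvPair (fun s => u₁ s - u₂ s) (fun s => H u₁ s - H u₂ s) t) t) ∧
        (∀ T : ℝ, 0 < T →
          0 ≤ ∫ t in (0:ℝ)..T,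
            (C *ᵥ x t + D *ᵥ dvPair (fun s => u₁ s - u₂ s) (fun s => H u₁ s - H u₂ s) t) ⬝ᵥ
              (M *ᵥ (C *ᵥ x t +
                D *ᵥ dvPair (fun s => u₁ s - u₂ s) (fun s => H u₁ s - H u₂ s) t))))
    (P : Matrix (Fin k) (Fin k) ℝ) (hP : P.PosSemidef) (τ : ℝ) (hτ : 0 < τ)
    (hLMI : (-(Matrix.fromBlocks (Aᵀ * P + P * A) (P * B) (Bᵀ * P)
          (-(piKronR n p11 p12 p22)) +
        τ • ((Matrix.fromCols C D)ᵀ * M * Matrix.fromCols C D))).PosSemidef) :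
    (∀ u₁ u₂ : ℝ → EuclideanSpace ℝ (Fin n),
      ContinuousOn u₁ (Set.Ici 0) → ContinuousOn u₂ (Set.Ici 0) →
      ∀ T : ℝ, 0 < T →
        0 ≤ p11 * (∫ t in (0:ℝ)..T, ‖u₁ t - u₂ t‖ ^ 2) +
            2 * p12 * (∫ t in (0:ℝ)..T, ⟪u₁ t - u₂ t, H u₁ t - H u₂ t⟫) +
            p22 * (∫ t in (0:ℝ)..T, ‖H u₁ t - H u₂ t‖ ^ 2)) ∧
      hardSRGc H ⊆ SRegion p11 p12 p22 :=
  hard_srg_overbound_via_iqc_general n m k H hH A B C D M p11 p12 p22 hIQC P hP τ hτ hLMI
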